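/- arXiv:2409.20133 — 2 statements merged into one kernel-verified Lean document; each statement's English description precedes it below -/
import Mathlib

section
/- Let X and V be random variables on finite alphabets with joint distribution P_{XV}. Every random variable U jointly distributed with (X,V) satisfying I(X;U) = 0 and H(V | X, U) = 0 has, for every x with P(X = x) > 0, H(U) ≥ H(V | X = x), where H(V | X = x) denotes the Shannon entropy of the conditional distribution P_{V|X=x}. Consequently H*(P_{XV}) ≥ max_{x : P(X=x)>0} H(P_{V|X=x}). -/
open scoped BigOperators Classical

/-- A probability mass function on a finite sample space. -/
structure FinPMF (Ω : Type) [Fintype Ω] where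
  p : Ω → ℝ
  nonneg : ∀ ω, 0 ≤ p ω
  sum_one : ∑ ω, p ω = 1

namespace FinPMF

variable {Ω : Type} [Fintype Ω]

/-- Probability of an event. -/
noncomputable def prob (μ : FinPMF Ω) (E : Ω → Prop) : ℝ :=
  ∑ ω, if E ω then μ.p ω else 0

end FinPMF

section InfoTheory

variable {Ω : Type} [Fintype Ω] {α β γ : Type}

/-- Distribution (pmf) of a random variable `X` under `μ`. -/
noncomputable def dist (μ : FinPMF Ω) (X : Ω → α) (a : α) : ℝ :=
  μ.prob (fun ω => X ω = a)

/-- Shannon entropy (in bits) of a random variable. -/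
noncomputable def entropy (μ : FinPMF Ω) (X : Ω → α) : ℝ :=
  -∑ ω, μ.p ω * Real.logb 2 (dist μ X (X ω))

/-- Conditional Shannon entropy `H(X | Y)`. -/
noncomputable def condEntropy (μ : FinPMF Ω) (X : Ω → α) (Y : Ω → β) : ℝ :=
  entropy μ (fun ω => (X ω, Y ω)) - entropy μ Y

/-- Mutual information `I(X ; Y)`. -/
noncomputable def mutualInfo (μ : FinPMF Ω) (X : Ω → α) (Y : Ω → β) : ℝ :=
  entropy μ X + entropy μ Y - entropy μ (fun ω => (X ω, Y ω))

/-- Conditional mutual information `I(X ; Y | Z)`. -/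
noncomputable def condMutualInfo (μ : FinPMF Ω) (X : Ω → α) (Y : Ω → β) (Z : Ω → γ) : ℝ :=
  entropy μ (fun ω => (X ω, Z ω)) + entropy μ (fun ω => (Y ω, Z ω))
    - entropy μ (fun ω => (X ω, Y ω, Z ω)) - entropy μ Z

/-- Two random variables are independent. -/
def IndepRV (μ : FinPMF Ω) (X : Ω → α) (Y : Ω → β) : Prop :=
  ∀ a b, dist μ (fun ω => (X ω, Y ω)) (a, b) = dist μ X a * dist μ Y b

/-- A `ZMod n`-valued random variable is uniformly distributed. -/
def UniformOn (μ : FinPMF Ω) {n : ℕ} (W : Ω → ZMod n) : Prop :=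
  ∀ a : ZMod n, dist μ W a = 1 / n

end InfoTheory

section Hstar

variable {Ω : Type} [Fintype Ω] {𝒳 𝒱 : Type}

/-- The set of achievable entropies `H(U)` in the minimum-entropy functional representation
problem for the joint distribution of `(X, V)`: `U` ranges over random variables on finite
alphabets, defined on any finite probability space carrying a copy `(X', V')` of `(X, V)`
with the same joint distribution, such that `I(X'; U) = 0` and `H(V' | X', U) = 0`. -/
def HstarSet (μ : FinPMF Ω) (X : Ω → 𝒳) (V : Ω → 𝒱) : Set ℝ :=
  {h | ∃ (Ω' : Type) (_ : Fintype Ω') (μ' : FinPMF Ω') (𝒰 : Type) (_ : Fintype 𝒰)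
        (X' : Ω' → 𝒳) (V' : Ω' → 𝒱) (U : Ω' → 𝒰),
        (∀ a, dist μ' (fun ω => (X' ω, V' ω)) a = dist μ (fun ω => (X ω, V ω)) a) ∧
        mutualInfo μ' X' U = 0 ∧
        condEntropy μ' V' (fun ω => (X' ω, U ω)) = 0 ∧
        entropy μ' U = h}

/-- `H*(P_{XV})`: the minimum entropy of a functional representation. -/
noncomputable def Hstar (μ : FinPMF Ω) (X : Ω → 𝒳) (V : Ω → 𝒱) : ℝ :=
  sInf (HstarSet μ X V)

end Hstar
section CondDist

variable {Ω : Type} [Fintype Ω] {𝒳 𝒱 : Type}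

/-- The conditional distribution `P_{V | X = x}` evaluated at `v`. -/
noncomputable def condDist (μ : FinPMF Ω) (V : Ω → 𝒱) (X : Ω → 𝒳) (x : 𝒳) (v : 𝒱) : ℝ :=
  μ.prob (fun ω => V ω = v ∧ X ω = x) / μ.prob (fun ω => X ω = x)

/-- The Shannon entropy (in bits) of the conditional distribution `P_{V | X = x}`. -/
noncomputable def condDistEntropy [Fintype 𝒱] (μ : FinPMF Ω) (V : Ω → 𝒱) (X : Ω → 𝒳)
    (x : 𝒳) : ℝ :=
  -∑ v : 𝒱, condDist μ V X x v * Real.logb 2 (condDist μ V X x v)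

end CondDist
set_option linter.unusedSectionVars false
section Helpers

open Finset

variable {Ω : Type} [Fintype Ω] {α β γ : Type}

lemma FinPMF.prob_congr (μ : FinPMF Ω) {E F : Ω → Prop} (h : ∀ ω, E ω ↔ F ω) :
    μ.prob E = μ.prob F := by
  unfold FinPMF.prob
  exact Finset.sum_congr rfl fun ω _ => by simp [h ω]

lemma FinPMF.prob_nonneg (μ : FinPMF Ω) (E : Ω → Prop) : 0 ≤ μ.prob E := by
  unfold FinPMF.prob
  refine Finset.sum_nonneg fun ω _ => ?_
  split
  · exact μ.nonneg ω
  · exact le_refl 0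

lemma dist_def (μ : FinPMF Ω) (X : Ω → α) (a : α) :
    _root_.dist μ X a = ∑ ω, if X ω = a then μ.p ω else 0 := rfl

lemma dist_congr (μ : FinPMF Ω) {X : Ω → α} {Y : Ω → β} {a : α} {b : β}
    (h : ∀ ω, X ω = a ↔ Y ω = b) : _root_.dist μ X a = _root_.dist μ Y b :=
  FinPMF.prob_congr μ h

lemma dist_nonneg' (μ : FinPMF Ω) (X : Ω → α) (a : α) : 0 ≤ _root_.dist μ X a :=
  FinPMF.prob_nonneg μ _

variable [Fintype α] [Fintype β]

lemma sum_mul_comp (μ : FinPMF Ω) (X : Ω → α) (f : α → ℝ) :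
    ∑ ω, μ.p ω * f (X ω) = ∑ a, _root_.dist μ X a * f a := by
  have h : ∀ a, _root_.dist μ X a * f a = ∑ ω, if X ω = a then μ.p ω * f (X ω) else 0 := by
    intro a
    simp only [dist_def]
    rw [Finset.sum_mul]
    refine Finset.sum_congr rfl fun ω _ => ?_
    by_cases h : X ω = a <;> simp [h]
  simp_rw [h]
  rw [Finset.sum_comm]
  refine Finset.sum_congr rfl fun ω _ => ?_
  simp

lemma entropy_eq (μ : FinPMF Ω) (X : Ω → α) :
    entropy μ X = -∑ a, _root_.dist μ X a * Real.logb 2 (_root_.dist μ X a) := by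
  unfold entropy
  rw [sum_mul_comp μ X (fun a => Real.logb 2 (_root_.dist μ X a))]

lemma sum_dist (μ : FinPMF Ω) (X : Ω → α) : ∑ a, _root_.dist μ X a = 1 := by
  simp only [dist_def]
  rw [Finset.sum_comm]
  simp [μ.sum_one]

lemma dist_fst (μ : FinPMF Ω) (X : Ω → α) (Y : Ω → β) (a : α) :
    ∑ b, _root_.dist μ (fun ω => (X ω, Y ω)) (a, b) = _root_.dist μ X a := by
  simp only [dist_def]
  rw [Finset.sum_comm]
  refine Finset.sum_congr rfl fun ω _ => ?_
  by_cases h : X ω = a <;> simp [Prod.ext_iff, h]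

lemma dist_snd (μ : FinPMF Ω) (X : Ω → α) (Y : Ω → β) (b : β) :
    ∑ a, _root_.dist μ (fun ω => (X ω, Y ω)) (a, b) = _root_.dist μ Y b := by
  simp only [dist_def]
  rw [Finset.sum_comm]
  refine Finset.sum_congr rfl fun ω _ => ?_
  by_cases h : Y ω = b <;> simp [Prod.ext_iff, h]

lemma dist_pair_le_fst (μ : FinPMF Ω) (X : Ω → α) (Y : Ω → β) (a : α) (b : β) :
    _root_.dist μ (fun ω => (X ω, Y ω)) (a, b) ≤ _root_.dist μ X a := by
  rw [← dist_fst μ X Y a]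
  exact Finset.single_le_sum (f := fun b => _root_.dist μ (fun ω => (X ω, Y ω)) (a, b)) (fun b _ => dist_nonneg' μ _ _) (Finset.mem_univ b)

lemma dist_pair_le_snd (μ : FinPMF Ω) (X : Ω → α) (Y : Ω → β) (a : α) (b : β) :
    _root_.dist μ (fun ω => (X ω, Y ω)) (a, b) ≤ _root_.dist μ Y b := by
  rw [← dist_snd μ X Y b]
  exact Finset.single_le_sum (f := fun a => _root_.dist μ (fun ω => (X ω, Y ω)) (a, b)) (fun a _ => dist_nonneg' μ _ _) (Finset.mem_univ a)

omit [Fintype α] [Fintype β] in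
lemma entropy_swap (μ : FinPMF Ω) (X : Ω → α) (Y : Ω → β) :
    entropy μ (fun ω => (X ω, Y ω)) = entropy μ (fun ω => (Y ω, X ω)) := by
  unfold entropy
  congr 1
  refine Finset.sum_congr rfl fun ω _ => ?_
  rw [dist_congr μ (Y := fun ω' => (Y ω', X ω')) (b := (Y ω, X ω))
    (fun ω' => by simp [Prod.ext_iff, and_comm])]

end Helpers
section Helpers2

set_option linter.unusedSectionVars false

open Finset

variable {Ω : Type} [Fintype Ω] {α β γ : Type} [Fintype α] [Fintype β]

lemma condEntropy_eq (μ : FinPMF Ω) (X : Ω → α) (Y : Ω → β) :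
    condEntropy μ X Y = ∑ a, ∑ b, _root_.dist μ (fun ω => (X ω, Y ω)) (a, b) *
      (Real.logb 2 (_root_.dist μ Y b)
        - Real.logb 2 (_root_.dist μ (fun ω => (X ω, Y ω)) (a, b))) := by
  unfold condEntropy
  rw [entropy_eq μ (fun ω => (X ω, Y ω)), entropy_eq μ Y, Fintype.sum_prod_type]
  have h1 : ∀ b, _root_.dist μ Y b * Real.logb 2 (_root_.dist μ Y b)
      = ∑ a, _root_.dist μ (fun ω => (X ω, Y ω)) (a, b) * Real.logb 2 (_root_.dist μ Y b) := by
    intro b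
    rw [← Finset.sum_mul, dist_snd]
  simp_rw [h1, mul_sub]
  have hsw : (∑ b, ∑ a, _root_.dist μ (fun ω => (X ω, Y ω)) (a, b) * Real.logb 2 (_root_.dist μ Y b))
      = ∑ a, ∑ b, _root_.dist μ (fun ω => (X ω, Y ω)) (a, b) * Real.logb 2 (_root_.dist μ Y b) :=
    Finset.sum_comm
  rw [hsw]
  simp only [Finset.sum_sub_distrib]
  ring

lemma mutualInfo_eq (μ : FinPMF Ω) (X : Ω → α) (Y : Ω → β) :
    mutualInfo μ X Y = ∑ a, ∑ b, _root_.dist μ (fun ω => (X ω, Y ω)) (a, b) *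
      (Real.logb 2 (_root_.dist μ (fun ω => (X ω, Y ω)) (a, b))
        - Real.logb 2 (_root_.dist μ X a) - Real.logb 2 (_root_.dist μ Y b)) := by
  unfold mutualInfo
  rw [entropy_eq μ (fun ω => (X ω, Y ω)), entropy_eq μ Y, entropy_eq μ X,
    Fintype.sum_prod_type]
  have h1 : ∀ b, _root_.dist μ Y b * Real.logb 2 (_root_.dist μ Y b)
      = ∑ a, _root_.dist μ (fun ω => (X ω, Y ω)) (a, b) * Real.logb 2 (_root_.dist μ Y b) := by
    intro b
    rw [← Finset.sum_mul, dist_snd]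
  have h2 : ∀ a, _root_.dist μ X a * Real.logb 2 (_root_.dist μ X a)
      = ∑ b, _root_.dist μ (fun ω => (X ω, Y ω)) (a, b) * Real.logb 2 (_root_.dist μ X a) := by
    intro a
    rw [← Finset.sum_mul, dist_fst]
  simp_rw [h1, h2, mul_sub]
  have hsw : (∑ b, ∑ a, _root_.dist μ (fun ω => (X ω, Y ω)) (a, b) * Real.logb 2 (_root_.dist μ Y b))
      = ∑ a, ∑ b, _root_.dist μ (fun ω => (X ω, Y ω)) (a, b) * Real.logb 2 (_root_.dist μ Y b) :=
    Finset.sum_comm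
  rw [hsw]
  simp only [Finset.sum_sub_distrib]
  ring

lemma term_nonneg {p q : ℝ} (hp : 0 ≤ p) (hpq : p ≤ q) :
    0 ≤ p * (Real.logb 2 q - Real.logb 2 p) := by
  rcases eq_or_lt_of_le hp with h | h
  · simp [← h]
  · refine mul_nonneg hp (sub_nonneg.2 ?_)
    exact Real.logb_le_logb_of_le one_lt_two h hpq

lemma term_eq_of_zero {p q : ℝ} (hp : 0 < p) (hpq : p ≤ q)
    (h : p * (Real.logb 2 q - Real.logb 2 p) = 0) : p = q := by
  rcases lt_or_eq_of_le hpq with hlt | he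
  · exfalso
    have hlog := Real.logb_lt_logb (b := 2) one_lt_two hp hlt
    nlinarith
  · exact he

lemma condEntropy_nonneg (μ : FinPMF Ω) (X : Ω → α) (Y : Ω → β) :
    0 ≤ condEntropy μ X Y := by
  rw [condEntropy_eq]
  refine Finset.sum_nonneg fun a _ => Finset.sum_nonneg fun b _ => ?_
  exact term_nonneg (dist_nonneg' μ _ _) (dist_pair_le_snd μ X Y a b)

lemma det_of_condEntropy_zero (μ : FinPMF Ω) (X : Ω → α) (Y : Ω → β)
    (h : condEntropy μ X Y = 0) :
    ∀ a b, _root_.dist μ (fun ω => (X ω, Y ω)) (a, b) = 0 ∨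
      _root_.dist μ (fun ω => (X ω, Y ω)) (a, b) = _root_.dist μ Y b := by
  rw [condEntropy_eq] at h
  have h' := (Finset.sum_eq_zero_iff_of_nonneg (fun a _ =>
    Finset.sum_nonneg fun b _ => term_nonneg (dist_nonneg' μ _ _)
      (dist_pair_le_snd μ X Y a b))).1 h
  intro a b
  have h'' := (Finset.sum_eq_zero_iff_of_nonneg (fun b _ =>
    term_nonneg (dist_nonneg' μ _ _) (dist_pair_le_snd μ X Y a b))).1
      (h' a (Finset.mem_univ a)) b (Finset.mem_univ b)
  rcases eq_or_lt_of_le (dist_nonneg' μ (fun ω => (X ω, Y ω)) (a, b)) with h0 | h0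
  · exact Or.inl h0.symm
  · exact Or.inr (term_eq_of_zero h0 (dist_pair_le_snd μ X Y a b) h'')

lemma condEntropy_eq_zero_of_comp (μ : FinPMF Ω) (X : Ω → α) (Y : Ω → β) (g : β → α)
    (h : ∀ ω, X ω = g (Y ω)) : condEntropy μ X Y = 0 := by
  rw [condEntropy_eq]
  refine Finset.sum_eq_zero fun a _ => Finset.sum_eq_zero fun b _ => ?_
  by_cases hab : a = g b
  · have hd : _root_.dist μ (fun ω => (X ω, Y ω)) (a, b) = _root_.dist μ Y b :=
      dist_congr μ (fun ω => by
        simp only [Prod.mk.injEq]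
        constructor
        · exact fun he => he.2
        · exact fun he => ⟨by rw [h ω, he, hab], he⟩)
    rw [hd]
    ring
  · have hd : _root_.dist μ (fun ω => (X ω, Y ω)) (a, b) = 0 := by
      rw [dist_def]
      refine Finset.sum_eq_zero fun ω _ => ?_
      rw [if_neg]
      intro he
      apply hab
      have h1 : X ω = a := congrArg Prod.fst he
      have h2 : Y ω = b := congrArg Prod.snd he
      rw [← h1, h ω, h2]
    rw [hd]
    ring

lemma mutualInfo_zero_of_indep (μ : FinPMF Ω) (X : Ω → α) (Y : Ω → β)
    (h : ∀ a b, _root_.dist μ (fun ω => (X ω, Y ω)) (a, b)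
      = _root_.dist μ X a * _root_.dist μ Y b) :
    mutualInfo μ X Y = 0 := by
  rw [mutualInfo_eq]
  refine Finset.sum_eq_zero fun a _ => Finset.sum_eq_zero fun b _ => ?_
  rw [h]
  rcases eq_or_lt_of_le (dist_nonneg' μ X a) with ha | ha
  · simp [← ha]
  rcases eq_or_lt_of_le (dist_nonneg' μ Y b) with hb | hb
  · simp [← hb]
  rw [Real.logb_mul ha.ne' hb.ne']
  ring

end Helpers2
section Helpers3

set_option linter.unusedSectionVars false

open Finset

variable {Ω : Type} [Fintype Ω] {α β γ : Type} [Fintype α] [Fintype β]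

lemma gibbs_term_le {p q : ℝ} (hp : 0 ≤ p) (hq : 0 ≤ q) (hq0 : q = 0 → p = 0) :
    p * (Real.log q - Real.log p) ≤ q - p := by
  rcases eq_or_lt_of_le hp with h0 | h0
  · simp [← h0, hq]
  · have hq' : 0 < q := by
      rcases eq_or_lt_of_le hq with h1 | h1
      · exact absurd (hq0 h1.symm) h0.ne'
      · exact h1
    have hd := Real.log_le_sub_one_of_pos (div_pos hq' h0)
    rw [Real.log_div hq'.ne' h0.ne'] at hd
    have h2 : p * (Real.log q - Real.log p) ≤ p * (q / p - 1) :=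
      mul_le_mul_of_nonneg_left hd hp
    calc p * (Real.log q - Real.log p) ≤ p * (q / p - 1) := h2
      _ = q - p := by field_simp
  
lemma gibbs_term_eq {p q : ℝ} (hp : 0 ≤ p) (hq : 0 ≤ q) (hq0 : q = 0 → p = 0)
    (h : p * (Real.log q - Real.log p) = q - p) : p = q := by
  rcases eq_or_lt_of_le hp with h0 | h0
  · rw [← h0] at h ⊢
    simp only [zero_mul, sub_zero] at h
    exact h
  · have hq' : 0 < q := by
      rcases eq_or_lt_of_le hq with h1 | h1
      · exact absurd (hq0 h1.symm) h0.ne'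
      · exact h1
    by_contra hne
    have hne' : q / p ≠ 1 := by
      intro he
      rw [div_eq_one_iff_eq h0.ne'] at he
      exact hne he.symm
    have hd := Real.log_lt_sub_one_of_pos (div_pos hq' h0) hne'
    rw [Real.log_div hq'.ne' h0.ne'] at hd
    have h2 : p * (Real.log q - Real.log p) < p * (q / p - 1) :=
      (mul_lt_mul_iff_right₀ h0).2 hd
    rw [h] at h2
    have h3 : p * (q / p - 1) = q - p := by field_simp
    rw [h3] at h2
    exact lt_irrefl _ h2

lemma indep_of_mutualInfo_zero (μ : FinPMF Ω) (X : Ω → α) (Y : Ω → β)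
    (h : mutualInfo μ X Y = 0) :
    ∀ a b, _root_.dist μ (fun ω => (X ω, Y ω)) (a, b)
      = _root_.dist μ X a * _root_.dist μ Y b := by
  have hlog2 : Real.log 2 ≠ 0 := (Real.log_pos one_lt_two).ne'
  -- termwise conversion of logb sums to natural-log Gibbs terms
  have key : ∀ a b, _root_.dist μ (fun ω => (X ω, Y ω)) (a, b) *
      (Real.logb 2 (_root_.dist μ (fun ω => (X ω, Y ω)) (a, b))
        - Real.logb 2 (_root_.dist μ X a) - Real.logb 2 (_root_.dist μ Y b)) * Real.log 2
      = -(_root_.dist μ (fun ω => (X ω, Y ω)) (a, b) *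
          (Real.log (_root_.dist μ X a * _root_.dist μ Y b)
            - Real.log (_root_.dist μ (fun ω => (X ω, Y ω)) (a, b)))) := by
    intro a b
    rcases eq_or_lt_of_le (dist_nonneg' μ (fun ω => (X ω, Y ω)) (a, b)) with h0 | h0
    · rw [← h0]
      ring
    · have hA : 0 < _root_.dist μ X a := lt_of_lt_of_le h0 (dist_pair_le_fst μ X Y a b)
      have hB : 0 < _root_.dist μ Y b := lt_of_lt_of_le h0 (dist_pair_le_snd μ X Y a b)
      rw [Real.log_mul hA.ne' hB.ne']
      unfold Real.logb
      field_simp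
      ring
  -- the sum of Gibbs terms is zero
  have hsum : ∑ c : α × β, _root_.dist μ (fun ω => (X ω, Y ω)) c *
      (Real.log (_root_.dist μ X c.1 * _root_.dist μ Y c.2)
        - Real.log (_root_.dist μ (fun ω => (X ω, Y ω)) c)) = 0 := by
    have h1 : (∑ a, ∑ b, _root_.dist μ (fun ω => (X ω, Y ω)) (a, b) *
        (Real.logb 2 (_root_.dist μ (fun ω => (X ω, Y ω)) (a, b))
          - Real.logb 2 (_root_.dist μ X a) - Real.logb 2 (_root_.dist μ Y b))) * Real.log 2
        = 0 := by
      rw [← mutualInfo_eq μ X Y, h, zero_mul]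
    rw [Finset.sum_mul] at h1
    simp_rw [Finset.sum_mul, key] at h1
    rw [Fintype.sum_prod_type]
    simp only [Finset.sum_neg_distrib] at h1
    have h2 := neg_eq_zero.1 h1
    simpa using h2
  -- sum of the dominating terms is also zero
  have hsum2 : ∑ c : α × β, (_root_.dist μ X c.1 * _root_.dist μ Y c.2
      - _root_.dist μ (fun ω => (X ω, Y ω)) c) = 0 := by
    rw [Finset.sum_sub_distrib]
    have hA : ∑ c : α × β, _root_.dist μ X c.1 * _root_.dist μ Y c.2 = 1 := by
      rw [Fintype.sum_prod_type]
      have : ∀ a, ∑ b, _root_.dist μ X a * _root_.dist μ Y b = _root_.dist μ X a := by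
        intro a
        rw [← Finset.mul_sum, sum_dist, mul_one]
      simp_rw [this]
      exact sum_dist μ X
    have hP : ∑ c : α × β, _root_.dist μ (fun ω => (X ω, Y ω)) c = 1 := sum_dist μ _
    rw [hA, hP, sub_self]
  -- termwise inequality
  have hle : ∀ c ∈ (univ : Finset (α × β)), _root_.dist μ (fun ω => (X ω, Y ω)) c *
      (Real.log (_root_.dist μ X c.1 * _root_.dist μ Y c.2)
        - Real.log (_root_.dist μ (fun ω => (X ω, Y ω)) c))
      ≤ _root_.dist μ X c.1 * _root_.dist μ Y c.2 - _root_.dist μ (fun ω => (X ω, Y ω)) c := by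
    rintro ⟨a, b⟩ _
    refine gibbs_term_le (dist_nonneg' μ _ _)
      (mul_nonneg (dist_nonneg' μ _ _) (dist_nonneg' μ _ _)) ?_
    intro hq
    rcases mul_eq_zero.1 hq with h' | h'
    · exact le_antisymm (h' ▸ dist_pair_le_fst μ X Y a b) (dist_nonneg' μ _ _)
    · exact le_antisymm (h' ▸ dist_pair_le_snd μ X Y a b) (dist_nonneg' μ _ _)
  have heach := (Finset.sum_eq_sum_iff_of_le hle).1 (by rw [hsum, hsum2])
  intro a b
  refine gibbs_term_eq (dist_nonneg' μ _ _)
    (mul_nonneg (dist_nonneg' μ _ _) (dist_nonneg' μ _ _)) ?_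
    (heach (a, b) (Finset.mem_univ _))
  intro hq
  rcases mul_eq_zero.1 hq with h' | h'
  · exact le_antisymm (h' ▸ dist_pair_le_fst μ X Y a b) (dist_nonneg' μ _ _)
  · exact le_antisymm (h' ▸ dist_pair_le_snd μ X Y a b) (dist_nonneg' μ _ _)

end Helpers3
section Helpers4

set_option linter.unusedSectionVars false

open Finset

variable {Ω : Type} [Fintype Ω] {α β γ : Type}

/-- The conditional probability measure given the event `X = x`. -/
noncomputable def condPMF (μ : FinPMF Ω) (X : Ω → α) (x : α) (hx : 0 < _root_.dist μ X x) :
    FinPMF Ω where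
  p ω := if X ω = x then μ.p ω / _root_.dist μ X x else 0
  nonneg ω := by
    show 0 ≤ (if X ω = x then μ.p ω / _root_.dist μ X x else 0)
    split
    · exact div_nonneg (μ.nonneg ω) (le_of_lt hx)
    · exact le_refl 0
  sum_one := by
    have h : ∀ ω, (if X ω = x then μ.p ω / _root_.dist μ X x else 0)
        = (if X ω = x then μ.p ω else 0) / _root_.dist μ X x := by
      intro ω
      split
      · rfl
      · rw [zero_div]
    simp_rw [h]
    rw [← Finset.sum_div, ← dist_def]
    exact div_self hx.ne'

lemma dist_condPMF (μ : FinPMF Ω) (X : Ω → α) (x : α) (hx : 0 < _root_.dist μ X x)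
    (W : Ω → γ) (w : γ) :
    _root_.dist (condPMF μ X x hx) W w
      = _root_.dist μ (fun ω => (W ω, X ω)) (w, x) / _root_.dist μ X x := by
  rw [dist_def, dist_def, Finset.sum_div]
  refine Finset.sum_congr rfl fun ω _ => ?_
  show (if W ω = w then (if X ω = x then μ.p ω / _root_.dist μ X x else 0) else 0) = _
  by_cases h1 : W ω = w <;> by_cases h2 : X ω = x <;>
    simp [h1, h2, Prod.ext_iff]

lemma condDistEntropy_eq_entropy {𝒳 𝒱 : Type} [Fintype 𝒱] (μ : FinPMF Ω) (V : Ω → 𝒱)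
    (X : Ω → 𝒳) (x : 𝒳) (hx : 0 < _root_.dist μ X x) :
    condDistEntropy μ V X x = entropy (condPMF μ X x hx) V := by
  rw [entropy_eq]
  unfold condDistEntropy
  congr 1
  refine Finset.sum_congr rfl fun v _ => ?_
  have h : _root_.dist (condPMF μ X x hx) V v = condDist μ V X x v := by
    rw [dist_condPMF]
    unfold condDist
    congr 1
    exact FinPMF.prob_congr μ fun ω => by simp [Prod.ext_iff]
  rw [h]

lemma main1 {Ω' 𝒳 𝒱 : Type} [Fintype Ω'] [Fintype 𝒳] [Fintype 𝒱]
    (μ : FinPMF Ω') (X : Ω' → 𝒳) (V : Ω' → 𝒱)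
    (𝒰 : Type) [Fintype 𝒰] (U : Ω' → 𝒰)
    (hI : mutualInfo μ X U = 0)
    (hC : condEntropy μ V (fun ω => (X ω, U ω)) = 0)
    (x : 𝒳) (hx : 0 < _root_.dist μ X x) :
    entropy μ U ≥ condDistEntropy μ V X x := by
  set ν := condPMF μ X x hx with hν
  have hind := indep_of_mutualInfo_zero μ X U hI
  -- the conditional law of U given X = x is the law of U
  have hU : ∀ u, _root_.dist ν U u = _root_.dist μ U u := by
    intro u
    rw [hν, dist_condPMF]
    have h1 : _root_.dist μ (fun ω => (U ω, X ω)) (u, x)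
        = _root_.dist μ (fun ω => (X ω, U ω)) (x, u) :=
      dist_congr μ fun ω => by simp [Prod.ext_iff, and_comm]
    rw [h1, hind x u, mul_comm, mul_div_assoc, div_self hx.ne', mul_one]
  have hEU : entropy ν U = entropy μ U := by
    rw [entropy_eq, entropy_eq]
    simp_rw [hU]
  -- V is conditionally deterministic
  have hdet := det_of_condEntropy_zero μ V (fun ω => (X ω, U ω)) hC
  have hCE0 : condEntropy ν V U = 0 := by
    rw [condEntropy_eq]
    refine Finset.sum_eq_zero fun v _ => Finset.sum_eq_zero fun u _ => ?_
    have h1 : _root_.dist ν (fun ω => (V ω, U ω)) (v, u)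
        = _root_.dist μ (fun ω => (V ω, (X ω, U ω))) (v, (x, u)) / _root_.dist μ X x := by
      rw [hν, dist_condPMF]
      congr 1
      exact dist_congr μ fun ω => by
        simp only [Prod.mk.injEq]
        tauto
    have h2 : _root_.dist ν U u
        = _root_.dist μ (fun ω => (X ω, U ω)) (x, u) / _root_.dist μ X x := by
      rw [hν, dist_condPMF]
      congr 1
      exact dist_congr μ fun ω => by
        simp only [Prod.mk.injEq]
        tauto
    rcases hdet v (x, u) with h | h
    · rw [h1, h]
      simp
    · rw [h1, h2, h]
      ring
  have hswap : entropy ν (fun ω => (U ω, V ω)) = entropy ν (fun ω => (V ω, U ω)) :=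
    entropy_swap ν U V
  have hnn : 0 ≤ condEntropy ν U V := condEntropy_nonneg ν U V
  have hE : condDistEntropy μ V X x = entropy ν V := condDistEntropy_eq_entropy μ V X x hx
  unfold condEntropy at hCE0 hnn
  rw [ge_iff_le, hE, ← hEU]
  linarith

end Helpers4
section Helpers5

set_option linter.unusedSectionVars false

open Finset

lemma HstarSet_nonempty {Ω 𝒳 𝒱 : Type} [Fintype Ω] [Fintype 𝒳] [Fintype 𝒱]
    (μ : FinPMF Ω) (X : Ω → 𝒳) (V : Ω → 𝒱) : (HstarSet μ X V).Nonempty := by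
  classical
  -- Ω is nonempty, hence so is 𝒱
  have hΩ : Nonempty Ω := by
    by_contra hne
    rw [not_nonempty_iff] at hne
    have h1 := μ.sum_one
    rw [Finset.univ_eq_empty, Finset.sum_empty] at h1
    exact zero_ne_one h1
  obtain ⟨ω₀⟩ := hΩ
  set v₀ : 𝒱 := V ω₀ with hv₀
  -- the conditional kernels
  set q : 𝒳 → 𝒱 → ℝ := fun x v =>
    if 0 < _root_.dist μ X x then condDist μ V X x v else if v = v₀ then 1 else 0 with hqdef
  have hqnn : ∀ x v, 0 ≤ q x v := by
    intro x v
    rw [hqdef]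
    dsimp only
    split
    · exact div_nonneg (FinPMF.prob_nonneg μ _) (FinPMF.prob_nonneg μ _)
    · split
      · exact zero_le_one
      · exact le_refl 0
  have hmargV : ∀ x, ∑ v, μ.prob (fun ω => V ω = v ∧ X ω = x) = μ.prob (fun ω => X ω = x) := by
    intro x
    unfold FinPMF.prob
    rw [Finset.sum_comm]
    refine Finset.sum_congr rfl fun ω _ => ?_
    by_cases h : X ω = x <;> simp [h]
  have hqsum : ∀ x, ∑ v, q x v = 1 := by
    intro x
    rw [hqdef]
    dsimp only
    split
    · rename_i hx
      unfold condDist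
      rw [← Finset.sum_div, hmargV]
      exact div_self (ne_of_gt hx)
    · simp
  have hkey : ∀ x v, _root_.dist μ X x * q x v
      = _root_.dist μ (fun ω => (X ω, V ω)) (x, v) := by
    intro x v
    have hnum : ∀ x v, μ.prob (fun ω => V ω = v ∧ X ω = x)
        = _root_.dist μ (fun ω => (X ω, V ω)) (x, v) :=
      fun x v => FinPMF.prob_congr μ fun ω => by
        simp only [Prod.mk.injEq]
        tauto
    rw [hqdef]
    dsimp only
    split
    · rename_i hx
      unfold condDist
      rw [hnum]
      rw [show (μ.prob fun ω => X ω = x) = _root_.dist μ X x from rfl]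
      rw [mul_comm, div_mul_cancel₀]
      exact ne_of_gt hx
    · rename_i hx
      have hx0 : _root_.dist μ X x = 0 :=
        le_antisymm (not_lt.1 hx) (dist_nonneg' μ X x)
      have hj : _root_.dist μ (fun ω => (X ω, V ω)) (x, v) = 0 :=
        le_antisymm (hx0 ▸ dist_pair_le_fst μ X V x v) (dist_nonneg' μ _ _)
      rw [hx0, hj, zero_mul]
  -- the product weight on functions
  set Q : (𝒳 → 𝒱) → ℝ := fun f => ∏ x, q x (f x) with hQdef
  have hQnn : ∀ f, 0 ≤ Q f := fun f => Finset.prod_nonneg fun x _ => hqnn _ _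
  have hQsum : ∑ f : 𝒳 → 𝒱, Q f = 1 := by
    rw [hQdef]
    dsimp only
    rw [← Fintype.piFinset_univ, ← Finset.prod_univ_sum]
    rw [Finset.prod_congr rfl fun x _ => hqsum x]
    exact Finset.prod_const_one
  -- slices of the product weight
  have hslice : ∀ (x : 𝒳) (v : 𝒱),
      (∑ f : 𝒳 → 𝒱, if f x = v then Q f else 0) = q x v := by
    intro x v
    have hrw : ∀ f : 𝒳 → 𝒱, (if f x = v then Q f else 0)
        = ∏ x', (if x' = x then (if f x' = v then q x' (f x') else 0) else q x' (f x')) := by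
      intro f
      by_cases h : f x = v
      · rw [if_pos h, hQdef]
        refine Finset.prod_congr rfl fun x' _ => ?_
        by_cases h' : x' = x <;> simp [h', h]
      · rw [if_neg h]
        refine (Finset.prod_eq_zero (Finset.mem_univ x) ?_).symm
        simp [h]
    simp_rw [hrw]
    rw [← Fintype.piFinset_univ, ← Finset.prod_univ_sum (t := fun _ => (Finset.univ : Finset 𝒱))
      (f := fun x' w => if x' = x then (if w = v then q x' w else 0) else q x' w)]
    have hfac : ∀ x', (∑ w, if x' = x then (if w = v then q x' w else 0) else q x' w)
        = (if x' = x then q x v else 1) := by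
      intro x'
      by_cases h' : x' = x
      · subst h'
        simp
      · simp [h', hqsum x']
    rw [Finset.prod_congr rfl fun x' _ => hfac x']
    simp
  -- the product space and measure
  set μ' : FinPMF (Ω × (𝒳 → 𝒱)) := ⟨fun p => μ.p p.1 * Q p.2,
    fun p => mul_nonneg (μ.nonneg _) (hQnn _), by
      rw [Fintype.sum_prod_type]
      simp_rw [← Finset.mul_sum, hQsum, mul_one]
      exact μ.sum_one⟩ with hμ'
  set X' : Ω × (𝒳 → 𝒱) → 𝒳 := fun p => X p.1 with hX'
  set V' : Ω × (𝒳 → 𝒱) → 𝒱 := fun p => p.2 (X p.1) with hV'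
  set U : Ω × (𝒳 → 𝒱) → (𝒳 → 𝒱) := fun p => p.2 with hU
  -- distribution computations
  have hdX : ∀ x, _root_.dist μ' X' x = _root_.dist μ X x := by
    intro x
    rw [dist_def, dist_def, Fintype.sum_prod_type]
    refine Finset.sum_congr rfl fun ω _ => ?_
    by_cases h : X ω = x
    · simp only [hμ', hX', h, if_true]
      rw [← Finset.mul_sum, hQsum, mul_one]
    · simp [hμ', hX', h]
  have hdU : ∀ g, _root_.dist μ' U g = Q g := by
    intro g
    rw [dist_def, Fintype.sum_prod_type]
    have : ∀ ω, (∑ f : 𝒳 → 𝒱, @ite ℝ ((U (ω, f)) = g) (Classical.propDecidable _)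
        (μ'.p (ω, f)) 0) = μ.p ω * Q g := by
      intro ω
      simp only [hU]
      rw [Finset.sum_ite_eq' Finset.univ g (fun f => μ'.p (ω, f))]
      simp [hμ']
    refine Eq.trans (Finset.sum_congr rfl fun ω _ => this ω) ?_
    rw [← Finset.sum_mul, μ.sum_one, one_mul]
  have hdXU : ∀ x g, _root_.dist μ' (fun p => (X' p, U p)) (x, g)
      = _root_.dist μ X x * Q g := by
    intro x g
    rw [dist_def, Fintype.sum_prod_type, dist_def, Finset.sum_mul]
    refine Finset.sum_congr rfl fun ω _ => ?_
    by_cases h : X ω = x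
    · simp only [hμ', hX', hU, Prod.mk.injEq, h, true_and]
      rw [Finset.sum_ite_eq' Finset.univ g (fun f => μ.p ω * Q f)]
      simp
    · simp [hμ', hX', hU, Prod.mk.injEq, h]
  have hdXV : ∀ x v, _root_.dist μ' (fun p => (X' p, V' p)) (x, v)
      = _root_.dist μ (fun ω => (X ω, V ω)) (x, v) := by
    intro x v
    rw [dist_def, Fintype.sum_prod_type]
    have hω : ∀ ω, (∑ f : 𝒳 → 𝒱, @ite ℝ ((X' (ω, f), V' (ω, f)) = (x, v))
          (Classical.propDecidable _) (μ'.p (ω, f)) 0)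
        = if X ω = x then μ.p ω * q x v else 0 := by
      intro ω
      by_cases h : X ω = x
      · rw [if_pos h]
        have : ∀ f : 𝒳 → 𝒱, (@ite ℝ ((X' (ω, f), V' (ω, f)) = (x, v))
              (Classical.propDecidable _) (μ'.p (ω, f)) 0)
            = μ.p ω * (if f x = v then Q f else 0) := by
          intro f
          simp only [hX', hV', hμ', Prod.mk.injEq, h, true_and]
          by_cases h2 : f x = v
          · simp [h, h2]
          · simp [h, h2]
        rw [Finset.sum_congr rfl fun f _ => this f, ← Finset.mul_sum, hslice]
      · rw [if_neg h]
        refine Finset.sum_eq_zero fun f _ => ?_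
        simp [hX', Prod.mk.injEq, h]
    refine Eq.trans (Finset.sum_congr rfl fun ω _ => hω ω) ?_
    have h2 : ∀ ω, (if X ω = x then μ.p ω * q x v else 0)
        = (if X ω = x then μ.p ω else 0) * q x v := by
      intro ω
      split <;> simp
    refine Eq.trans (Finset.sum_congr rfl fun ω _ => h2 ω) ?_
    rw [← Finset.sum_mul, ← dist_def, hkey]
  -- assemble the membership witness
  refine ⟨entropy μ' U, Ω × (𝒳 → 𝒱), inferInstance, μ', (𝒳 → 𝒱), inferInstance,
    X', V', U, ?_, ?_, ?_, rfl⟩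
  · rintro ⟨x, v⟩
    exact hdXV x v
  · refine mutualInfo_zero_of_indep μ' X' U fun x g => ?_
    rw [hdXU x g, hdX x, hdU g]
  · exact condEntropy_eq_zero_of_comp μ' V' (fun p => (X' p, U p))
      (fun r => r.2 r.1) (fun p => rfl)

end Helpers5
/-- Any `U` (on a finite alphabet, jointly distributed with `(X, V)`)
with `I(X; U) = 0` and `H(V | X, U) = 0` satisfies `H(U) ≥ H(P_{V | X = x})` for every `x`
with `P(X = x) > 0`; consequently `H*(P_{XV}) ≥ max_{x : P(X=x) > 0} H(P_{V | X = x})`. -/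
theorem entropy_ge_condDistEntropy_of_functional_representation
    {Ω 𝒳 𝒱 : Type} [Fintype Ω] [Fintype 𝒳] [Fintype 𝒱]
    (μ : FinPMF Ω) (X : Ω → 𝒳) (V : Ω → 𝒱) :
    (∀ (𝒰 : Type) (_ : Fintype 𝒰) (U : Ω → 𝒰),
        mutualInfo μ X U = 0 →
        condEntropy μ V (fun ω => (X ω, U ω)) = 0 →
        ∀ x : 𝒳, 0 < dist μ X x → entropy μ U ≥ condDistEntropy μ V X x) ∧
    (∀ x : 𝒳, 0 < dist μ X x → Hstar μ X V ≥ condDistEntropy μ V X x) := by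
  constructor
  · intro 𝒰 i U hI hC x hx
    exact main1 μ X V 𝒰 U hI hC x hx
  · intro x hx
    rw [ge_iff_le]
    unfold Hstar
    refine le_csInf (HstarSet_nonempty μ X V) ?_
    rintro h ⟨Ω', iΩ', μ', 𝒰, i𝒰, X', V', U, hjoint, hI, hC, rfl⟩
    have hdistX : ∀ x', _root_.dist μ' X' x' = _root_.dist μ X x' := by
      intro x'
      rw [← dist_fst μ' X' V' x', ← dist_fst μ X V x']
      exact Finset.sum_congr rfl fun v _ => hjoint (x', v)
    have hcd : ∀ v, condDist μ' V' X' x v = condDist μ V X x v := by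
      intro v
      unfold condDist
      have e1 : μ'.prob (fun ω => V' ω = v ∧ X' ω = x)
          = _root_.dist μ' (fun ω => (X' ω, V' ω)) (x, v) :=
        FinPMF.prob_congr μ' fun ω => by
          simp only [Prod.mk.injEq]
          tauto
      have e2 : μ.prob (fun ω => V ω = v ∧ X ω = x)
          = _root_.dist μ (fun ω => (X ω, V ω)) (x, v) :=
        FinPMF.prob_congr μ fun ω => by
          simp only [Prod.mk.injEq]
          tauto
      have hd : μ'.prob (fun ω => X' ω = x) = μ.prob (fun ω => X ω = x) := hdistX x
      rw [e1, e2, hjoint, hd]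
    have hE : condDistEntropy μ' V' X' x = condDistEntropy μ V X x := by
      unfold condDistEntropy
      congr 1
      exact Finset.sum_congr rfl fun v _ => by rw [hcd v]
    rw [← hE]
    exact main1 μ' X' V' 𝒰 U hI hC x (by rw [hdistX x]; exact hx)
end

section
/- (Decodability of the coded caching delivery scheme.) Let K, N, s ≥ 1 and 1 ≤ p < K. For each n ∈ Fin N and each subset Ω ⊆ Fin K with |Ω| = p, let Y(n, Ω) ∈ (ZMod 2)^s be the subfile of file n indexed by Ω; the cache of user k contains exactly the subfiles Y(n, Ω) with k ∈ Ω. Let d : Fin K → Fin N be the demand vector, and for each subset γ ⊆ Fin K with |γ| = p + 1 define C(γ) = ⊕_{j ∈ γ} Y(d(j), γ \ {j}) (coordinatewise XOR, i.e., sum in (ZMod 2)^s). Then for every user k ∈ Fin K and every subset Ω ⊆ Fin K with |Ω| = p and k ∉ Ω: (i) Y(d(k), Ω) = C(Ω ∪ {k}) ⊕ (⊕_{j ∈ Ω} Y(d(j), (Ω ∪ {k}) \ {j})); and (ii) for every j ∈ Ω, the subfile Y(d(j), (Ω ∪ {k}) \ {j}) lies in user k's cache, i.e., k ∈ (Ω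 ∪ {k}) \ {j}. Hence user k recovers every uncached subfile of its demanded file d(k) from the transmitted messages {C(γ)} and its cache. -/
open scoped BigOperators

/-- Decodability of the Maddah-Ali–Niesen coded caching delivery scheme.
Files are split into subfiles `Y n Ω ∈ (ZMod 2)^s` indexed by `p`-element subsets `Ω` of the
`K` users; user `k` caches `Y n Ω` iff `k ∈ Ω`. For the demand vector `d` the server sends,
for each `(p+1)`-element subset `γ`, the message `C γ = ⊕_{j ∈ γ} Y (d j) (γ \ {j})`
(coordinatewise XOR, i.e. the sum in `(ZMod 2)^s`). Then for every user `k` and every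
`p`-element subset `Ω` with `k ∉ Ω`:
(i) `Y (d k) Ω = C (Ω ∪ {k}) ⊕ (⊕_{j ∈ Ω} Y (d j) ((Ω ∪ {k}) \ {j}))`, and
(ii) each subfile `Y (d j) ((Ω ∪ {k}) \ {j})` for `j ∈ Ω` is in user `k`'s cache, i.e.
`k ∈ (Ω ∪ {k}) \ {j}`. Hence user `k` recovers every uncached subfile of its demanded file. -/
theorem coded_caching_decodability
    (K N s p : ℕ) (hK : 1 ≤ K) (hN : 1 ≤ N) (hs : 1 ≤ s) (hp : 1 ≤ p) (hpK : p < K)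
    (Y : Fin N → Finset (Fin K) → (Fin s → ZMod 2))
    (d : Fin K → Fin N)
    (C : Finset (Fin K) → (Fin s → ZMod 2))
    (hC : ∀ γ : Finset (Fin K), γ.card = p + 1 →
      C γ = ∑ j ∈ γ, Y (d j) (γ.erase j)) :
    ∀ (k : Fin K) (Ω : Finset (Fin K)), Ω.card = p → k ∉ Ω →
      (Y (d k) Ω =
        C (insert k Ω) + ∑ j ∈ Ω, Y (d j) ((insert k Ω).erase j)) ∧
      (∀ j ∈ Ω, k ∈ (insert k Ω).erase j) := by
  intro k Ω hΩ hk
  constructor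
  · have hcard : (insert k Ω).card = p + 1 := by
      rw [Finset.card_insert_of_notMem hk, hΩ]
    rw [hC _ hcard, Finset.sum_insert hk, Finset.erase_insert hk]
    have h2 : (∑ j ∈ Ω, Y (d j) ((insert k Ω).erase j)) +
        (∑ j ∈ Ω, Y (d j) ((insert k Ω).erase j)) = 0 := by
      funext i
      exact CharTwo.add_self_eq_zero _
    rw [add_assoc, h2, add_zero]
  · intro j hj
    exact Finset.mem_erase.2 ⟨fun h => hk (h ▸ hj), Finset.mem_insert_self k Ω⟩
end
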